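/- arXiv:2010.14664 — 2 statements merged into one kernel-verified Lean document; each statement's English description precedes it below -/
import Mathlib

section
/- Let X_1,…,X_D be independent nonnegative random variables and W_1,…,W_D nonnegative reals such that P[X_d ≥ W_d] ≥ κ for each d, with w_lo ≤ W_d ≤ w_hi for some 0 < w_lo ≤ w_hi. Then P[ Σ_{d=1}^D X_d ≤ (2κ/3) Σ_{d=1}^D W_d ] ≤ exp(−(2/9)·κ²·D·w_lo²/w_hi²). -/
/-!
Truncate each variable at its small-ball level: `Y_d = W_d · 1{X_d ≥ W_d}` satisfies `Y_d ≤ X_d`,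
takes values in `[0, W_d]` and has mean at least `κ W_d`. Hence `∑ X_d ≤ (2κ/3) ∑ W_d` forces
`∑ Y_d` to fall at least `(κ/3) ∑ W_d` below its mean, which Hoeffding's inequality bounds by
`exp (-(2/9) κ² (∑ W_d)² / ∑ W_d²)`, and `(∑ W_d)² / ∑ W_d² ≥ D w_lo² / w_hi²`.
-/

open MeasureTheory ProbabilityTheory Real Finset

theorem measureReal_sum_le_sum_integral_sub_le {Ω ι : Type*} [MeasurableSpace Ω] {μ : Measure Ω}
    [IsProbabilityMeasure μ] {Y : ι → Ω → ℝ} {s : Finset ι} (hindep : iIndepFun Y μ)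
    (hmeas : ∀ i ∈ s, AEMeasurable (Y i) μ) {a b : ι → ℝ}
    (hY : ∀ i ∈ s, ∀ᵐ ω ∂μ, Y i ω ∈ Set.Icc (a i) (b i)) {ε : ℝ} (hε : 0 ≤ ε) :
    μ.real {ω | ∑ i ∈ s, Y i ω ≤ ∑ i ∈ s, μ[Y i] - ε}
      ≤ exp (-2 * ε ^ 2 / ∑ i ∈ s, (b i - a i) ^ 2) := by
  have hsubG : ∀ i ∈ s, HasSubgaussianMGF (fun ω ↦ μ[Y i] - Y i ω) ((‖b i - a i‖₊ / 2) ^ 2) μ :=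
    fun i hi ↦ (hasSubgaussianMGF_of_mem_Icc (hmeas i hi) (hY i hi)).neg.congr
      (ae_of_all _ fun ω ↦ by simp)
  have hindep' : iIndepFun (fun i ω ↦ μ[Y i] - Y i ω) μ :=
    hindep.comp (fun i t ↦ ∫ ω, Y i ω ∂μ - t) fun _ ↦ measurable_const.sub measurable_id
  have hset : {ω | ∑ i ∈ s, Y i ω ≤ ∑ i ∈ s, μ[Y i] - ε}
      = {ω | ε ≤ ∑ i ∈ s, (μ[Y i] - Y i ω)} := by
    ext ω
    simp only [Set.mem_ofPred_eq, sum_sub_distrib]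
    constructor <;> intro h <;> linarith
  have hc : ((∑ i ∈ s, (‖b i - a i‖₊ / 2) ^ 2 : NNReal) : ℝ) = (∑ i ∈ s, (b i - a i) ^ 2) / 4 := by
    push_cast
    simp only [div_pow, sum_div]
    norm_num
  rw [hset]
  refine (HasSubgaussianMGF.measure_sum_ge_le_of_iIndepFun hindep' hsubG hε).trans_eq ?_
  rw [hc]
  ring_nf

theorem card_mul_sq_div_sq_le_sq_sum_div_sum_sq {ι : Type*} (s : Finset ι) {w : ι → ℝ}
    {lo hi : ℝ} (hlo : 0 < lo) (hw : ∀ i ∈ s, w i ∈ Set.Icc lo hi) :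
    #s * lo ^ 2 / hi ^ 2 ≤ (∑ i ∈ s, w i) ^ 2 / ∑ i ∈ s, w i ^ 2 := by
  obtain rfl | ⟨j, hj⟩ := s.eq_empty_or_nonempty
  · simp
  have hhi : 0 < hi := hlo.trans_le ((hw j hj).1.trans (hw j hj).2)
  have hsum : #s * lo ≤ ∑ i ∈ s, w i := by
    simpa using card_nsmul_le_sum s w lo fun i hi ↦ (hw i hi).1
  have hsum_sq : ∑ i ∈ s, w i ^ 2 ≤ #s * hi ^ 2 := by
    simpa using sum_le_card_nsmul s (w · ^ 2) (hi ^ 2) fun i hi ↦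
      pow_le_pow_left₀ (hlo.le.trans (hw i hi).1) (hw i hi).2 2
  have hsum_sq_pos : 0 < ∑ i ∈ s, w i ^ 2 :=
    sum_pos (fun i hi ↦ pow_pos (hlo.trans_le (hw i hi).1) 2) ⟨j, hj⟩
  rw [div_le_div_iff₀ (by positivity) hsum_sq_pos]
  have hsq : (#s * lo) ^ 2 ≤ (∑ i ∈ s, w i) ^ 2 := pow_le_pow_left₀ (by positivity) hsum 2
  calc #s * lo ^ 2 * ∑ i ∈ s, w i ^ 2 ≤ #s * lo ^ 2 * (#s * hi ^ 2) := by gcongr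
    _ = (#s * lo) ^ 2 * hi ^ 2 := by ring
    _ ≤ (∑ i ∈ s, w i) ^ 2 * hi ^ 2 := by gcongr

theorem indicator_Ici_self_le {w x : ℝ} (hx : 0 ≤ x) : (Set.Ici w).indicator (fun _ ↦ w) x ≤ x := by
  by_cases h : w ≤ x <;> simp [h, hx]

theorem indicator_Ici_self_mem_Icc {w : ℝ} (hw : 0 ≤ w) (x : ℝ) :
    (Set.Ici w).indicator (fun _ ↦ w) x ∈ Set.Icc 0 w := by
  by_cases h : w ≤ x <;> simp [h, hw]

theorem mul_le_integral_indicator_Ici_comp {Ω : Type*} [MeasurableSpace Ω] {μ : Measure Ω}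
    [IsFiniteMeasure μ] {X : Ω → ℝ} (hX : Measurable X) {w κ : ℝ} (hw : 0 ≤ w)
    (hκ : ENNReal.ofReal κ ≤ μ {ω | w ≤ X ω}) :
    κ * w ≤ μ[(Set.Ici w).indicator (fun _ ↦ w) ∘ X] := by
  have hκ' : κ ≤ μ.real {ω | w ≤ X ω} :=
    (ENNReal.ofReal_le_iff_le_toReal (measure_ne_top _ _)).1 hκ
  change κ * w ≤ ∫ ω, (X ⁻¹' Set.Ici w).indicator (fun _ ↦ w) ω ∂μ
  rw [integral_indicator_const _ (measurableSet_Ici.preimage hX)]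
  exact mul_le_mul_of_nonneg_right hκ' hw

theorem measureReal_sum_le_mul_sum_sub_le {Ω ι : Type*} [MeasurableSpace Ω] {μ : Measure Ω}
    [IsProbabilityMeasure μ] {X : ι → Ω → ℝ} {s : Finset ι} (hindep : iIndepFun X μ)
    (hmeas : ∀ i ∈ s, Measurable (X i)) (hnonneg : ∀ i ∈ s, ∀ ω, 0 ≤ X i ω) {w : ι → ℝ}
    (hw : ∀ i ∈ s, 0 ≤ w i) {κ : ℝ} (hsb : ∀ i ∈ s, ENNReal.ofReal κ ≤ μ {ω | w i ≤ X i ω})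
    {ε : ℝ} (hε : 0 ≤ ε) :
    μ.real {ω | ∑ i ∈ s, X i ω ≤ κ * ∑ i ∈ s, w i - ε}
      ≤ exp (-2 * ε ^ 2 / ∑ i ∈ s, w i ^ 2) := by
  set Y : ι → Ω → ℝ := fun i ↦ (Set.Ici (w i)).indicator (fun _ ↦ w i) ∘ X i
  have hY_indep : iIndepFun Y μ :=
    hindep.comp _ fun i ↦ measurable_const.indicator measurableSet_Ici
  have hY_meas i (hi : i ∈ s) : AEMeasurable (Y i) μ :=
    ((measurable_const.indicator measurableSet_Ici).comp (hmeas i hi)).aemeasurable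
  have hY_mem i (hi : i ∈ s) : ∀ᵐ ω ∂μ, Y i ω ∈ Set.Icc 0 (w i) :=
    ae_of_all _ fun ω ↦ indicator_Ici_self_mem_Icc (hw i hi) _
  have hY_mean : κ * ∑ i ∈ s, w i ≤ ∑ i ∈ s, μ[Y i] := by
    rw [mul_sum]
    exact sum_le_sum fun i hi ↦ mul_le_integral_indicator_Ici_comp (hmeas i hi) (hw i hi) (hsb i hi)
  have hsub : {ω | ∑ i ∈ s, X i ω ≤ κ * ∑ i ∈ s, w i - ε}
      ⊆ {ω | ∑ i ∈ s, Y i ω ≤ ∑ i ∈ s, μ[Y i] - ε} := fun ω hω ↦ by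
    have : ∑ i ∈ s, Y i ω ≤ ∑ i ∈ s, X i ω :=
      sum_le_sum fun i hi ↦ indicator_Ici_self_le (hnonneg i hi ω)
    simp only [Set.mem_ofPred_eq] at hω ⊢
    linarith
  have hhoeffding := measureReal_sum_le_sum_integral_sub_le (a := 0) hY_indep hY_meas hY_mem hε
  simp only [Pi.zero_apply, sub_zero] at hhoeffding
  exact (measureReal_mono hsub).trans hhoeffding

theorem stmt5_general {Ω : Type*} [MeasurableSpace Ω] (μ : Measure Ω) [IsProbabilityMeasure μ]
    (D : ℕ) (X : Fin D → Ω → ℝ) (κ : ℝ) (hκ : κ ∈ Set.Ioc (0 : ℝ) 1)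
    (hmeas : ∀ d, Measurable (X d))
    (hindep : iIndepFun X μ)
    (hnonneg : ∀ d ω, 0 ≤ X d ω)
    (W : Fin D → ℝ) (wlo whi : ℝ) (hlo : 0 < wlo)
    (hW : ∀ d, W d ∈ Set.Icc wlo whi)
    (hsb : ∀ d, ENNReal.ofReal κ ≤ μ {ω | W d ≤ X d ω}) :
    μ {ω | ∑ d, X d ω ≤ (2 * κ / 3) * ∑ d, W d}
      ≤ ENNReal.ofReal (Real.exp (-(2 / 9) * κ ^ 2 * D * wlo ^ 2 / whi ^ 2)) := by
  have hW0 d : 0 ≤ W d := hlo.le.trans (hW d).1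
  have hε : 0 ≤ κ / 3 * ∑ d, W d := mul_nonneg (by linarith [hκ.1]) (sum_nonneg fun d _ ↦ hW0 d)
  have hhoeffding := measureReal_sum_le_mul_sum_sub_le (s := univ) hindep (fun d _ ↦ hmeas d)
    (fun d _ ↦ hnonneg d) (fun d _ ↦ hW0 d) (fun d _ ↦ hsb d) hε
  have hset : κ * ∑ d, W d - κ / 3 * ∑ d, W d = 2 * κ / 3 * ∑ d, W d := by ring
  have hratio := card_mul_sq_div_sq_le_sq_sum_div_sum_sq univ hlo fun d _ ↦ hW d
  rw [hset] at hhoeffding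
  rw [card_univ, Fintype.card_fin] at hratio
  have hexp : -2 * (κ / 3 * ∑ d, W d) ^ 2 / ∑ d, W d ^ 2
      ≤ -(2 / 9) * κ ^ 2 * D * wlo ^ 2 / whi ^ 2 :=
    calc -2 * (κ / 3 * ∑ d, W d) ^ 2 / ∑ d, W d ^ 2
        = -(2 / 9) * κ ^ 2 * ((∑ d, W d) ^ 2 / ∑ d, W d ^ 2) := by ring
      _ ≤ -(2 / 9) * κ ^ 2 * (D * wlo ^ 2 / whi ^ 2) :=
        mul_le_mul_of_nonpos_left hratio (by nlinarith [sq_nonneg κ])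
      _ = -(2 / 9) * κ ^ 2 * D * wlo ^ 2 / whi ^ 2 := by ring
  exact (ENNReal.le_ofReal_iff_toReal_le (measure_ne_top _ _) (exp_pos _).le).2
    (hhoeffding.trans (exp_le_exp.2 hexp))

/-- Independent nonnegative random variables X_d with P[X_d ≥ W_d] ≥ κ, where
0 < w_lo ≤ W_d ≤ w_hi. Then
P[ Σ X_d ≤ (2κ/3) Σ W_d ] ≤ exp(−(2/9)·κ²·D·w_lo²/w_hi²). -/
theorem stmt5 {Ω : Type*} [MeasurableSpace Ω] (μ : Measure Ω) [IsProbabilityMeasure μ]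
    (D : ℕ) (hD : 0 < D) (X : Fin D → Ω → ℝ) (κ : ℝ) (hκ : κ ∈ Set.Ioc (0 : ℝ) 1)
    (hmeas : ∀ d, Measurable (X d))
    (hindep : iIndepFun X μ)
    (hnonneg : ∀ d ω, 0 ≤ X d ω)
    (W : Fin D → ℝ) (wlo whi : ℝ) (hlo : 0 < wlo) (hlohi : wlo ≤ whi)
    (hW : ∀ d, W d ∈ Set.Icc wlo whi)
    (hsb : ∀ d, ENNReal.ofReal κ ≤ μ {ω | W d ≤ X d ω}) :
    μ {ω | ∑ d, X d ω ≤ (2 * κ / 3) * ∑ d, W d}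
      ≤ ENNReal.ofReal (Real.exp (-(2 / 9) * κ ^ 2 * D * wlo ^ 2 / whi ^ 2)) :=
  stmt5_general μ D X κ hκ hmeas hindep hnonneg W wlo whi hlo hW hsb
end

section
/- Let W ~ χ²_k (chi-squared with k degrees of freedom). Then for every a > 0, P[W ≥ k + 2√(ka) + 2a] ≤ e^{−a}. -/
/-!
Chernoff's method. For `t < 1/2` a standard Gaussian `X` has `𝔼[exp (t X²)] = (1 - 2t)^(-1/2)`,
so by independence `P[W ≥ ε] ≤ exp (-t ε) (1 - 2t)^(-k/2)`. With `r = √(ka)`,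
`ε = k + 2r + 2a` and `t = r / (k + 2r)`, the inequality `log x ≤ (x - x⁻¹)/2 = sinh (log x)`
for `x = (1 - 2t)⁻¹ = 1 + 2r/k` makes the exponent of this bound exactly `-a`.
-/

open MeasureTheory ProbabilityTheory Real

lemma Real.log_le_sub_inv_div_two {x : ℝ} (hx : 1 ≤ x) : log x ≤ (x - x⁻¹) / 2 := by
  rw [← sinh_log (by linarith)]
  exact self_le_sinh_iff.2 (log_nonneg hx)

lemma Real.exp_neg_mul_mul_one_sub_two_mul_rpow_le {k r a t : ℝ} (hk : 0 < k) (hr : 0 ≤ r)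
    (hra : r ^ 2 = k * a) (ht : t * (k + 2 * r) = r) :
    exp (-t * (k + 2 * r + 2 * a)) * (1 - 2 * t) ^ (-(k / 2)) ≤ exp (-a) := by
  have hkr : 0 < k + 2 * r := by positivity
  set x := (k + 2 * r) / k with hx_def
  have h_one_sub : 1 - 2 * t = x⁻¹ := by
    rw [inv_div, eq_div_iff hkr.ne']
    linear_combination (-2) * ht
  have hx : 1 ≤ x := by rw [le_div_iff₀ hk]; linarith
  rw [h_one_sub, inv_rpow (by positivity), ← rpow_neg (by positivity), neg_neg,
    rpow_def_of_pos (by positivity), ← exp_add, exp_le_exp]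
  have ht' : t = r / (k + 2 * r) := by rw [eq_div_iff hkr.ne']; exact ht
  calc -t * (k + 2 * r + 2 * a) + log x * (k / 2)
      ≤ -t * (k + 2 * r + 2 * a) + (x - x⁻¹) / 2 * (k / 2) := by
        gcongr
        exact log_le_sub_inv_div_two hx
    _ = -a := by
        rw [ht', hx_def]
        field_simp
        linear_combination (-4) * hra

lemma gaussianPDFReal_zero_one_mul_exp_mul_sq (t x : ℝ) :
    gaussianPDFReal 0 1 x * exp (t * x ^ 2) = (√(2 * π))⁻¹ * exp (-(1 / 2 - t) * x ^ 2) := by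
  rw [gaussianPDFReal, mul_assoc, ← exp_add]
  push_cast
  ring_nf

lemma integrable_exp_mul_sq_gaussianReal {t : ℝ} (ht : t < 1 / 2) :
    Integrable (fun x ↦ exp (t * x ^ 2)) (gaussianReal 0 1) := by
  rw [gaussianReal_of_var_ne_zero _ one_ne_zero, gaussianPDF_def,
    integrable_withDensity_iff_integrable_smul' (by fun_prop)
      (ae_of_all _ fun _ ↦ ENNReal.ofReal_lt_top)]
  simp only [ENNReal.toReal_ofReal (gaussianPDFReal_nonneg _ _ _), smul_eq_mul,
    gaussianPDFReal_zero_one_mul_exp_mul_sq]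
  exact (integrable_exp_neg_mul_sq (by linarith)).const_mul _

lemma mgf_sq_gaussianReal {t : ℝ} (ht : t < 1 / 2) :
    mgf (fun x ↦ x ^ 2) (gaussianReal 0 1) t = (1 - 2 * t) ^ (-(1 / 2 : ℝ)) := by
  rw [mgf, integral_gaussianReal_eq_integral_smul one_ne_zero]
  simp only [smul_eq_mul, gaussianPDFReal_zero_one_mul_exp_mul_sq]
  rw [integral_const_mul, integral_gaussian, rpow_neg (by linarith), ← sqrt_eq_rpow,
    ← sqrt_inv, ← sqrt_inv, ← sqrt_mul (by positivity)]
  congr 1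
  field_simp

namespace ProbabilityTheory

variable {Ω ι : Type*} [MeasurableSpace Ω] {P : Measure Ω} {t : ℝ}

lemma HasLaw.integrable_exp_mul_sq_of_gaussianReal {X : Ω → ℝ}
    (hX : HasLaw X (gaussianReal 0 1) P) (ht : t < 1 / 2) :
    Integrable (fun ω ↦ exp (t * X ω ^ 2)) P := by
  have h := integrable_exp_mul_sq_gaussianReal ht
  rw [← hX.map_eq] at h
  exact (integrable_map_measure h.aestronglyMeasurable hX.aemeasurable).1 h

lemma HasLaw.mgf_sq_of_gaussianReal {X : Ω → ℝ}
    (hX : HasLaw X (gaussianReal 0 1) P) (ht : t < 1 / 2) :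
    mgf (fun ω ↦ X ω ^ 2) P t = (1 - 2 * t) ^ (-(1 / 2 : ℝ)) := by
  rw [← mgf_sq_gaussianReal ht, ← hX.map_eq, mgf_map hX.aemeasurable (by fun_prop)]
  rfl

lemma measure_sum_sq_ge_le_of_gaussianReal [Fintype ι] {g : ι → Ω → ℝ}
    (hmeas : ∀ i, Measurable (g i)) (hindep : iIndepFun g P)
    (hgauss : ∀ i, P.map (g i) = gaussianReal 0 1) (ht0 : 0 ≤ t) (ht : t < 1 / 2) (ε : ℝ) :
    P {ω | ε ≤ ∑ i, g i ω ^ 2}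
      ≤ ENNReal.ofReal (exp (-t * ε) * (1 - 2 * t) ^ (-(Fintype.card ι / 2 : ℝ))) := by
  have := hindep.isProbabilityMeasure
  have hlaw i : HasLaw (g i) (gaussianReal 0 1) P := ⟨(hmeas i).aemeasurable, hgauss i⟩
  set X : ι → Ω → ℝ := fun i ω ↦ g i ω ^ 2
  have hX_meas i : Measurable (X i) := (hmeas i).pow_const 2
  have hX_indep : iIndepFun X P := hindep.comp (fun _ x ↦ x ^ 2) fun _ ↦ by fun_prop
  have hsum : (fun ω ↦ ∑ i, g i ω ^ 2) = ∑ i, X i := by ext; simp [X]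
  have h_int : Integrable (fun ω ↦ exp (t * (∑ i, X i) ω)) P :=
    hX_indep.integrable_exp_mul_sum hX_meas fun i _ ↦
      (hlaw i).integrable_exp_mul_sq_of_gaussianReal ht
  have h_mgf : mgf (∑ i, X i) P t = (1 - 2 * t) ^ (-(Fintype.card ι / 2 : ℝ)) := by
    rw [hX_indep.mgf_sum hX_meas,
      Finset.prod_congr rfl fun i _ ↦ (hlaw i).mgf_sq_of_gaussianReal ht, Finset.prod_const,
      Finset.card_univ, ← rpow_mul_natCast (by linarith)]
    ring_nf
  have h_chernoff := measure_ge_le_exp_mul_mgf ε ht0 h_int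
  rw [h_mgf, ← hsum] at h_chernoff
  rw [← ofReal_measureReal]
  exact ENNReal.ofReal_le_ofReal h_chernoff

end ProbabilityTheory

theorem stmt8_general {Ω : Type*} [MeasurableSpace Ω] (μ : Measure Ω)
    (k : ℕ) (g : Fin k → Ω → ℝ)
    (hmeas : ∀ i, Measurable (g i))
    (hindep : iIndepFun g μ)
    (hgauss : ∀ i, Measure.map (g i) μ = gaussianReal 0 1)
    (W : Ω → ℝ) (hW : W = fun ω => ∑ i, (g i ω) ^ 2)
    (a : ℝ) (ha : 0 < a) :
    μ {ω | (k : ℝ) + 2 * Real.sqrt (k * a) + 2 * a ≤ W ω} ≤ ENNReal.ofReal (Real.exp (-a)) := by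
  subst hW
  rcases k.eq_zero_or_pos with rfl | hk
  · simp [show ¬ 2 * a ≤ 0 by linarith]
  set r := √(k * a)
  have hk' : (0 : ℝ) < k := by exact_mod_cast hk
  have hkr : 0 < k + 2 * r := by positivity
  have ht : r / (k + 2 * r) * (k + 2 * r) = r := div_mul_cancel₀ r hkr.ne'
  have ht_lt : r / (k + 2 * r) < 1 / 2 := by
    rw [div_lt_iff₀ hkr]
    linarith
  refine (measure_sum_sq_ge_le_of_gaussianReal hmeas hindep hgauss (by positivity) ht_lt _).trans ?_
  rw [Fintype.card_fin]
  exact ENNReal.ofReal_le_ofReal <| exp_neg_mul_mul_one_sub_two_mul_rpow_le hk' (sqrt_nonneg _)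
    (sq_sqrt (by positivity)) ht

/-- Laurent–Massart upper tail bound for a chi-squared random variable with k degrees of
freedom (sum of squares of k independent standard Gaussians):
P[W ≥ k + 2√(ka) + 2a] ≤ e^{−a} for all a > 0. -/
theorem stmt8 {Ω : Type*} [MeasurableSpace Ω] (μ : Measure Ω) [IsProbabilityMeasure μ]
    (k : ℕ) (g : Fin k → Ω → ℝ)
    (hmeas : ∀ i, Measurable (g i))
    (hindep : iIndepFun g μ)
    (hgauss : ∀ i, Measure.map (g i) μ = gaussianReal 0 1)
    (W : Ω → ℝ) (hW : W = fun ω => ∑ i, (g i ω) ^ 2)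
    (a : ℝ) (ha : 0 < a) :
    μ {ω | (k : ℝ) + 2 * Real.sqrt (k * a) + 2 * a ≤ W ω} ≤ ENNReal.ofReal (Real.exp (-a)) :=
  stmt8_general μ k g hmeas hindep hgauss W hW a ha
end
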